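/- Let A be a unique factorization domain which is a finitely generated ℂ-algebra (an integral domain), let x₁, …, x_s be pairwise non-associated prime elements of A, p₁, …, p_s positive integers, α = x₁^{p₁}⋯x_s^{p_s}, and let g(Z) ∈ A[Z]∖A be an irreducible polynomial such that for each 1 ≤ i ≤ s the ideal (x_i, g(Z)) of A[Z] is prime, g(Z) ∉ x_i A[Z], and Z − a ∉ (x_i, g(Z))A[Z] for every a ∈ A. Let B = A[Y,Z]/(αY − g(Z)) (an integral domain), with y, z the residue classes of Y, Z. If B is faithfully flat as an A-module and g'(Z) ∉ (x_i, g(Z))A[Z] for every 1 ≤ i ≤ s, then B is not isomorphic as an A-algebra to the polynomial ring A[T]; i.e. the morphism Spec B → Spec A is not a trivial 𝔸¹-bundle. -/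

import Mathlib

/-!
Reduce modulo some `x = xᵢ`, which divides `α`. Setting `Y ↦ Y` and `Z ↦ z`, where `z` is the
class of `Z` in the domain `Q = A[Z]/(x, g)`, kills `αY - g(Z)`, so `B` maps onto `Q[Y]`. If
`B ≅ A[T]` as `A`-algebras, we get a surjection of `A`-algebras `A[T] → Q[Y]`; comparing degrees,
`T` must go to a polynomial of positive degree, and then only constants of `A[T]` reach constants
of `Q[Y]`, so `A → Q` is surjective. In particular `z` is the class of some `a ∈ A`, i.e.
`Z - a ∈ (x, g)`.
-/

open Polynomial

namespace Polynomial

variable {R S : Type*} [CommRing R] [CommRing S] [Algebra R S]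

theorem algHom_apply_eq_map_comp (f : R[X] →ₐ[R] S[X]) (q : R[X]) :
    f q = (q.map (algebraMap R S)).comp (f X) := by
  rw [comp_eq_aeval, aeval_map_algebraMap, aeval_algHom_apply, aeval_X_left_apply]

theorem surjective_algebraMap_of_surjective_algHom [IsDomain S] (f : R[X] →ₐ[R] S[X])
    (hf : Function.Surjective f) : Function.Surjective (algebraMap R S) := by
  have hdeg : (f X).natDegree ≠ 0 := by
    intro h0
    obtain ⟨c, hc⟩ := natDegree_eq_zero.mp h0
    obtain ⟨q, hq⟩ := hf X
    rw [algHom_apply_eq_map_comp, ← hc, comp_C] at hq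
    exact X_ne_C _ hq.symm
  intro d
  obtain ⟨q, hq⟩ := hf (C d)
  rw [algHom_apply_eq_map_comp] at hq
  have hconst : (q.map (algebraMap R S)).natDegree = 0 := by
    simpa [natDegree_comp, hdeg] using congrArg natDegree hq
  rw [eq_C_of_natDegree_eq_zero hconst, C_comp, coeff_map] at hq
  exact ⟨q.coeff 0, C_injective hq⟩

end Polynomial

section ReductionModuloIdeal

variable {R : Type*} [CommRing R] (P : Ideal R[X])

theorem aeval_C_mk_X (q : R[X]) :
    aeval (C (Ideal.Quotient.mk P X)) q = C (Ideal.Quotient.mk P q) := by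
  have hmk : aeval (Ideal.Quotient.mk P X) q = Ideal.Quotient.mk P q := by
    rw [← Ideal.Quotient.mkₐ_eq_mk R, aeval_algHom_apply, aeval_X_left_apply]
  rw [← hmk]
  exact aeval_algHom_apply (CAlgHom (R := R) (A := R[X] ⧸ P)) _ q

/-- Substitution `Y ↦ Y`, `Z ↦ (Z mod P)` from `R[Y, Z]` (variables `0` and `1`) to `(R[Z]/P)[Y]`. -/
noncomputable def reductionMod : MvPolynomial (Fin 2) R →ₐ[R] (R[X] ⧸ P)[X] :=
  MvPolynomial.aeval ![X, C (Ideal.Quotient.mk P X)]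

theorem reductionMod_aeval_X_one (q : R[X]) :
    reductionMod P (aeval (MvPolynomial.X 1) q) = C (Ideal.Quotient.mk P q) := by
  rw [← aeval_algHom_apply, reductionMod, MvPolynomial.aeval_X]
  exact aeval_C_mk_X P q

theorem reductionMod_surjective : Function.Surjective (reductionMod P) := by
  intro f
  induction f using Polynomial.induction_on with
  | C t =>
    obtain ⟨q, rfl⟩ := Ideal.Quotient.mk_surjective t
    exact ⟨_, reductionMod_aeval_X_one P q⟩
  | add f₁ f₂ h₁ h₂ =>
    obtain ⟨m₁, rfl⟩ := h₁
    obtain ⟨m₂, rfl⟩ := h₂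
    exact ⟨m₁ + m₂, map_add _ _ _⟩
  | monomial n t ih =>
    obtain ⟨m, hm⟩ := ih
    refine ⟨m * MvPolynomial.X 0, ?_⟩
    rw [map_mul, hm, pow_succ, mul_assoc]
    simp [reductionMod]

theorem ker_le_ker_reductionMod {α : R} {g : R[X]} (hα : C α ∈ P) (hg : g ∈ P) :
    Ideal.span {MvPolynomial.C α * MvPolynomial.X 0 - aeval (MvPolynomial.X 1) g} ≤
      RingHom.ker (reductionMod P) := by
  rw [Ideal.span_le, Set.singleton_subset_iff, SetLike.mem_coe, RingHom.mem_ker, map_sub,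
    reductionMod_aeval_X_one, Ideal.Quotient.eq_zero_iff_mem.mpr hg, map_mul, MvPolynomial.algHom_C,
    Polynomial.algebraMap_apply, ← Ideal.Quotient.mk_algebraMap, Polynomial.algebraMap_eq,
    Ideal.Quotient.eq_zero_iff_mem.mpr hα]
  simp

theorem exists_surjective_algHom_of_ker_eq_span {B : Type*} [CommRing B] [Algebra R B]
    {π : MvPolynomial (Fin 2) R →ₐ[R] B} (hπ : Function.Surjective π) {α : R} {g : R[X]}
    (hker : RingHom.ker π =
      Ideal.span {MvPolynomial.C α * MvPolynomial.X 0 - aeval (MvPolynomial.X 1) g})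
    (hα : C α ∈ P) (hg : g ∈ P) :
    ∃ ψ : B →ₐ[R] (R[X] ⧸ P)[X], Function.Surjective ψ := by
  let ψ := AlgHom.liftOfSurjective (C := (R[X] ⧸ P)[X]) π hπ (reductionMod P)
    (hker ▸ ker_le_ker_reductionMod P hα hg)
  exact ⟨ψ, AlgHom.liftOfSurjective_surjective _ _ _ _ (reductionMod_surjective P)⟩

end ReductionModuloIdeal

theorem stmt11
    (A : Type) [CommRing A]
    (s : ℕ) (hs : 0 < s) (x : Fin s → A)
    (p : Fin s → ℕ) (hp : ∀ i, 0 < p i)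
    (α : A) (hα : α = ∏ i, x i ^ p i)
    (g : Polynomial A)
    (hprime : ∀ i, (Ideal.span {Polynomial.C (x i), g}).IsPrime)
    (hZa : ∀ i, ∀ a : A,
      Polynomial.X - Polynomial.C a ∉ Ideal.span {Polynomial.C (x i), g})
    (B : Type) [CommRing B] [Algebra A B]
    (π : MvPolynomial (Fin 2) A →ₐ[A] B)
    (hπsurj : Function.Surjective π)
    (hπker : RingHom.ker π = Ideal.span
      {MvPolynomial.C α * MvPolynomial.X 0 -
        Polynomial.aeval (MvPolynomial.X 1 : MvPolynomial (Fin 2) A) g}) :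
    ¬ Nonempty (B ≃ₐ[A] Polynomial A) := by
  rintro ⟨φ⟩
  let i : Fin s := ⟨0, hs⟩
  let P : Ideal A[X] := Ideal.span {C (x i), g}
  have : P.IsPrime := hprime i
  have hαP : C α ∈ P := by
    obtain ⟨c, hc⟩ : x i ∣ α := hα ▸ (dvd_pow_self _ (hp i).ne').trans
      (Finset.dvd_prod_of_mem _ (Finset.mem_univ i))
    rw [hc, C_mul]
    exact Ideal.mul_mem_right _ _ (Ideal.subset_span (Set.mem_insert _ _))
  obtain ⟨ψ, hψ⟩ := exists_surjective_algHom_of_ker_eq_span P hπsurj hπker hαP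
    (Ideal.subset_span (Set.mem_insert_of_mem _ rfl))
  obtain ⟨a, ha⟩ := surjective_algebraMap_of_surjective_algHom (ψ.comp φ.symm.toAlgHom)
    (hψ.comp φ.symm.surjective) (Ideal.Quotient.mk P X)
  exact hZa i a (Ideal.Quotient.eq.mp ha.symm)
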